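/- arXiv:1111.1042 — 3 statements merged into one kernel-verified Lean document; each statement's English description precedes it below -/
import Mathlib

section
/- Let u : ℝ^{2N} → ℝ be continuous and ℤ^{2N}-periodic, and suppose u attains its maximum at x̂ = (x̂₁, x̂₂). If γ is irrational and for every z ∈ ℝ^N one has u(x̂₁ + z, x̂₂ + γ⁻¹ z) = u(x̂₁, x̂₂), then u is constant on ℝ^{2N}. -/
/-- Strong maximum principle core: a continuous `ℤ^{2N}`-periodic function attaining its
maximum at `xh` and constant along the dense winding line `{xh + (z, γ⁻¹ z)}` (with `γ`
irrational) is globally constant. -/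
theorem constant_on_winding_line_implies_constant (N : ℕ) (γ : ℝ) (hγ : Irrational γ)
    (u : (Fin N → ℝ) × (Fin N → ℝ) → ℝ) (hu : Continuous u)
    (hper : ∀ (x : (Fin N → ℝ) × (Fin N → ℝ)) (k₁ k₂ : Fin N → ℤ),
      u (x.1 + fun i => (k₁ i : ℝ), x.2 + fun i => (k₂ i : ℝ)) = u x)
    (xh : (Fin N → ℝ) × (Fin N → ℝ))
    (hmax : ∀ x, u x ≤ u xh)
    (hline : ∀ z : Fin N → ℝ, u (xh.1 + z, xh.2 + γ⁻¹ • z) = u xh) :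
    ∀ x, u x = u xh := by
  intro x
  -- the subgroup ℤ + ℤ γ⁻¹ of ℝ
  set S : AddSubgroup ℝ :=
    { carrier := {r | ∃ m n : ℤ, r = (m : ℝ) + (n : ℝ) * γ⁻¹}
      zero_mem' := ⟨0, 0, by simp⟩
      add_mem' := by
        rintro a b ⟨m, n, rfl⟩ ⟨m', n', rfl⟩
        exact ⟨m + m', n + n', by push_cast; ring⟩
      neg_mem' := by
        rintro a ⟨m, n, rfl⟩
        exact ⟨-m, -n, by push_cast; ring⟩ } with hSdef
  have hγinv : Irrational γ⁻¹ := hγ.inv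
  have hdense : Dense (S : Set ℝ) := by
    rcases S.dense_or_cyclic with h | ⟨a, ha⟩
    · exact h
    · exfalso
      have h1 : (1 : ℝ) ∈ S := ⟨1, 0, by simp⟩
      have h2 : γ⁻¹ ∈ S := ⟨0, 1, by simp⟩
      rw [ha, AddSubgroup.mem_closure_singleton] at h1 h2
      obtain ⟨m, hm⟩ := h1
      obtain ⟨n, hn⟩ := h2
      have hm0 : (m : ℝ) ≠ 0 := by
        intro h
        have hmz : m = 0 := by exact_mod_cast h
        rw [hmz] at hm; simp at hm
      have ha0 : a = ((m : ℝ))⁻¹ := by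
        field_simp
        rw [← hm]; push_cast [zsmul_eq_mul]; ring
      apply hγinv.ne_rat ((n : ℚ) / (m : ℚ))
      rw [← hn, ha0]
      push_cast [zsmul_eq_mul]
      field_simp
  -- base point on the line above x.1
  set b : Fin N → ℝ := xh.2 + γ⁻¹ • (x.1 - xh.1) with hb
  -- the closed set of good translates
  set T : Set (Fin N → ℝ) := (fun y => u (x.1, b + y)) ⁻¹' {u xh} with hT
  have hTclosed : IsClosed T := by
    apply IsClosed.preimage _ isClosed_singleton
    exact hu.comp (continuous_const.prodMk (continuous_const.add continuous_id))
  have hsub : Set.pi Set.univ (fun _ : Fin N => (S : Set ℝ)) ⊆ T := by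
    intro y hy
    have hy' : ∀ i, ∃ m n : ℤ, y i = (m : ℝ) + (n : ℝ) * γ⁻¹ := fun i => hy i trivial
    choose m n hmn using hy'
    have key : u (x.1 + fun i => ((n i : ℝ)), b + γ⁻¹ • fun i => ((n i : ℝ))) = u xh := by
      have := hline ((x.1 - xh.1) + fun i => ((n i : ℝ)))
      have e1 : xh.1 + ((x.1 - xh.1) + fun i => ((n i : ℝ)))
          = x.1 + fun i => ((n i : ℝ)) := by
        funext i; simp; ring
      have e2 : xh.2 + γ⁻¹ • ((x.1 - xh.1) + fun i => ((n i : ℝ)))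
          = b + γ⁻¹ • fun i => ((n i : ℝ)) := by
        funext i; simp [hb, smul_add]; ring
      rwa [e1, e2] at this
    have hper' := hper (x.1, b + y) n (fun i => -(m i))
    simp only at hper'
    have e3 : (b + y) + (fun i => ((-(m i) : ℤ) : ℝ))
        = b + γ⁻¹ • fun i => ((n i : ℝ)) := by
      funext i
      simp [hmn i]
      ring
    rw [e3, key] at hper'
    exact hper'.symm
  have hTdense : Dense T :=
    Dense.mono hsub (dense_pi Set.univ fun i _ => hdense)
  have hTuniv : T = Set.univ := by
    rw [← hTclosed.closure_eq, hTdense.closure_eq]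
  have hx2 : (x.2 - b) ∈ T := hTuniv ▸ Set.mem_univ _
  have : u (x.1, b + (x.2 - b)) = u xh := hx2
  simpa using this
end

section
/- Let dq be a positive measure on ℝ^N assigning positive mass to every nonempty open set, and let u : ℝ^N → ℝ be continuous, attain a global maximum M, and satisfy: at every maximum point x of u, ∫_{ℝ^N}[u(x+z) − u(x)] dq(z) ≥ 0 (the integrand being ≤ 0). Then u ≡ M on ℝ^N. -/
open MeasureTheory

/-- Strong maximum principle under the nondegeneracy condition that `q` charges every
nonempty open set: if `u` is continuous, attains a global maximum `M`, and at every
maximum point `x` the Lévy integral `∫ [u(x+z) − u(x)] dq(z)` is `≥ 0` — equivalently,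
since the integrand is nonpositive, `∫⁻ (u(x) − u(x+z))⁺ dq = 0` — then `u ≡ M`. -/
theorem strong_maximum_principle_charging_measure (N : ℕ) (q : Measure (Fin N → ℝ))
    (hopen : ∀ U : Set (Fin N → ℝ), IsOpen U → U.Nonempty → 0 < q U)
    (u : (Fin N → ℝ) → ℝ) (hu : Continuous u)
    (M : ℝ) (hM : ∀ x, u x ≤ M) (hattain : ∃ x, u x = M)
    (hint : ∀ x, u x = M →
      (∫⁻ z, ENNReal.ofReal (u x - u (x + z)) ∂q) = 0) :
    ∀ x, u x = M := by
  obtain ⟨x₀, hx₀⟩ := hattain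
  intro y
  by_contra hy
  have hylt : u y < M := lt_of_le_of_ne (hM y) hy
  set U : Set (Fin N → ℝ) := {z | u (x₀ + z) < M} with hU
  have hUopen : IsOpen U := by
    have : Continuous fun z => u (x₀ + z) := hu.comp (continuous_const.add continuous_id)
    exact isOpen_lt this continuous_const
  have hUne : U.Nonempty := ⟨y - x₀, by simp [hU, hylt]⟩
  have hqU : 0 < q U := hopen U hUopen hUne
  -- the integrand is measurable
  have hmeas : Measurable fun z => ENNReal.ofReal (u x₀ - u (x₀ + z)) :=
    ENNReal.measurable_ofReal.comp
      (continuous_const.sub (hu.comp (continuous_const.add continuous_id))).measurable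
  have h0 := hint x₀ hx₀
  rw [lintegral_eq_zero_iff hmeas] at h0
  -- a.e. u (x₀ + z) ≥ u x₀ = M, contradicting positivity on U
  have hsub : U ⊆ {z | ENNReal.ofReal (u x₀ - u (x₀ + z)) ≠ 0} := by
    intro z hz
    simp only [hU, Set.mem_setOf_eq] at hz ⊢
    have hpos : 0 < u x₀ - u (x₀ + z) := by rw [hx₀]; linarith
    exact (ENNReal.ofReal_pos.mpr hpos).ne'
  have : q U = 0 := measure_mono_null hsub h0
  exact absurd this hqU.ne'
end

section
/- Let d : ℝ^{MN} → ℝ be Lipschitz continuous and ℤ^{MN}-periodic, and suppose that for every constant vector B(α) in a family {B(α) : α ∈ A} one has ⟨B(α), ∇d(ȳ)⟩ = 0 at almost every ȳ. If the set ⋃_{α(·),t≥0} {ȳ + ∫₀ᵗ B(α(s)) ds} of reachable points from any ȳ is dense in T^{MN}, then d is constant. -/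
open MeasureTheory intervalIntegral Set Filter

/-!
The directions `w` along which `d` is invariant under every translation `x ↦ x + τ • w` form a
linear subspace. Each `B α` lies in it: to see `d (· + r • B α) = d`, test the difference against
a smooth compactly supported `g`; by differentiation under the integral sign, with the Lipschitz
constant of `d` dominating the difference quotients, `ρ ↦ ∫ g z * d (z + ρ • B α) dz` has
derivative `∫ g z * ∂_{B α} d (z + ρ • B α) dz = 0`, so it is constant. A reachable point
differs from `ȳ` by the integral of a function with values in that subspace, which is complete
(being finite-dimensional) and so contains the integral; thus `d` equals `d ȳ` on a dense set,
hence everywhere.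
-/

section InvariantDirections

variable (R : Type*) {E β : Type*} [Semiring R] [AddCommMonoid E] [Module R E]

def invariantDirections (f : E → β) : Submodule R E where
  carrier := {w | ∀ (τ : R) (x : E), f (x + τ • w) = f x}
  add_mem' {w₁ w₂} h₁ h₂ τ x := by rw [smul_add, ← add_assoc, h₂, h₁]
  zero_mem' τ x := by rw [smul_zero, add_zero]
  smul_mem' c w h τ x := by rw [smul_smul, h]

end InvariantDirections

section IntegralMem

variable {E : Type*} [NormedAddCommGroup E] [NormedSpace ℝ E] [CompleteSpace E]
  {S : Submodule ℝ E} [CompleteSpace S]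

theorem Submodule.integral_mem {X : Type*} [MeasurableSpace X] {μ : Measure X} {f : X → E}
    (hf : ∀ x, f x ∈ S) : ∫ x, f x ∂μ ∈ S :=
  S.subtypeₗᵢ.integral_comp_comm (μ := μ) (fun x => (⟨f x, hf x⟩ : S)) ▸ Submodule.coe_mem _

theorem Submodule.intervalIntegral_mem {μ : Measure ℝ} {f : ℝ → E} (hf : ∀ x, f x ∈ S)
    (a b : ℝ) : ∫ x in a..b, f x ∂μ ∈ S :=
  S.sub_mem (Submodule.integral_mem hf) (Submodule.integral_mem hf)

end IntegralMem

theorem HasLineDerivAt.hasDerivAt_add_smul {𝕜 E F : Type*} [NontriviallyNormedField 𝕜]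
    [NormedAddCommGroup E] [NormedSpace 𝕜 E] [NormedAddCommGroup F] [NormedSpace 𝕜 F]
    {f : E → F} {f' : F} {x v : E} {t₀ : 𝕜} (hf : HasLineDerivAt 𝕜 f f' (x + t₀ • v) v) :
    HasDerivAt (fun t => f (x + t • v)) f' t₀ := by
  have h := HasDerivAt.comp_sub_const t₀ t₀ (by rw [sub_self]; exact hf)
  convert h using 2 with t
  rw [add_assoc, ← add_smul, add_sub_cancel]

section LineInvariance

variable {E : Type*} [NormedAddCommGroup E] [NormedSpace ℝ E] [MeasurableSpace E] [BorelSpace E]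
  {μ : Measure E} {f : E → ℝ}

theorem integrable_mul_comp_add_smul [IsFiniteMeasureOnCompacts μ] (hf : Continuous f)
    {g : E → ℝ} (hg : Continuous g) (hgs : HasCompactSupport g) (v : E) (ρ : ℝ) :
    Integrable (fun z => g z * f (z + ρ • v)) μ :=
  (hg.mul (hf.comp (continuous_add_const _))).integrable_of_hasCompactSupport hgs.mul_right

variable {K : NNReal} {v : E}

theorem LipschitzWith.hasDerivAt_integral_mul_comp_add_smul [μ.IsAddRightInvariant]
    [IsFiniteMeasureOnCompacts μ] (hf : LipschitzWith K f)
    (hv : ∀ᵐ y ∂μ, HasLineDerivAt ℝ f 0 y v) {g : E → ℝ} (hg : Continuous g)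
    (hgs : HasCompactSupport g) (ρ₀ : ℝ) :
    HasDerivAt (fun ρ => ∫ z, g z * f (z + ρ • v) ∂μ) 0 ρ₀ := by
  set bound : E → ℝ := fun z => ‖g z‖ * (K * ‖v‖)
  have hF_int := integrable_mul_comp_add_smul (μ := μ) hf.continuous hg hgs v
  have hlip (z : E) : LipschitzWith (Real.nnabs (bound z)) fun ρ : ℝ => g z * f (z + ρ • v) := by
    refine LipschitzWith.of_dist_le_mul fun ρ σ => ?_
    rw [Real.coe_nnabs, abs_of_nonneg (by positivity)]
    calc dist (g z * f (z + ρ • v)) (g z * f (z + σ • v))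
        = ‖g z‖ * dist (f (z + ρ • v)) (f (z + σ • v)) := by
          rw [Real.dist_eq, Real.dist_eq, ← mul_sub, abs_mul, Real.norm_eq_abs]
      _ ≤ ‖g z‖ * (K * dist (z + ρ • v) (z + σ • v)) := by gcongr; exact hf.dist_le_mul _ _
      _ = ‖g z‖ * (K * ‖v‖) * dist ρ σ := by
          rw [dist_add_left, dist_eq_norm, ← sub_smul, norm_smul, ← dist_eq_norm]
          ring
  have hderiv : ∀ᵐ z ∂μ, HasDerivAt (fun ρ => g z * f (z + ρ • v)) 0 ρ₀ := by
    filter_upwards [(measurePreserving_add_right μ (ρ₀ • v)).quasiMeasurePreserving.ae hv]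
      with z hz
    simpa using hz.hasDerivAt_add_smul.const_mul (g z)
  simpa using (hasDerivAt_integral_of_dominated_loc_of_lip univ_mem
    (Eventually.of_forall fun ρ => (hF_int ρ).aestronglyMeasurable) (hF_int ρ₀)
    aestronglyMeasurable_const (ae_of_all _ fun z => (hlip z).lipschitzOnWith)
    ((hg.integrable_of_hasCompactSupport hgs).norm.mul_const _) hderiv).2

theorem LipschitzWith.apply_add_smul_eq_of_ae_hasLineDerivAt_zero [FiniteDimensional ℝ E]
    [μ.IsAddHaarMeasure] (hf : LipschitzWith K f) (hv : ∀ᵐ y ∂μ, HasLineDerivAt ℝ f 0 y v)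
    (r : ℝ) (x : E) : f (x + r • v) = f x := by
  have hcont : Continuous fun z => f (z + r • v) - f z :=
    (hf.continuous.comp (continuous_add_const _)).sub hf.continuous
  suffices (fun z => f (z + r • v) - f z) =ᵐ[μ] 0 from
    sub_eq_zero.1 (congrFun ((hcont.ae_eq_iff_eq μ continuous_const).1 this) x)
  refine ae_eq_zero_of_integral_contDiff_smul_eq_zero hcont.locallyIntegrable fun g hg hgs => ?_
  have hI := hf.hasDerivAt_integral_mul_comp_add_smul hv hg.continuous hgs
  have hconst := is_const_of_deriv_eq_zero (fun ρ => (hI ρ).differentiableAt)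
    (fun ρ => (hI ρ).deriv) r 0
  have hF_int := integrable_mul_comp_add_smul (μ := μ) hf.continuous hg.continuous hgs v
  calc ∫ z, g z • (f (z + r • v) - f z) ∂μ
      = ∫ z, g z * f (z + r • v) ∂μ - ∫ z, g z * f (z + (0 : ℝ) • v) ∂μ := by
        rw [← integral_sub (hF_int r) (hF_int 0)]
        simp only [zero_smul, add_zero, smul_eq_mul, mul_sub]
    _ = 0 := sub_eq_zero.2 hconst

end LineInvariance

theorem lipschitz_periodic_invariant_dense_reachable_constant_general (M N : ℕ)
    (A : Type*) [MeasurableSpace A]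
    (B : A → (Fin (M * N) → ℝ))
    (d : (Fin (M * N) → ℝ) → ℝ) (K : NNReal) (hLip : LipschitzWith K d)
    (hgrad : ∀ α : A, ∀ᵐ y ∂(volume : Measure (Fin (M * N) → ℝ)),
      DifferentiableAt ℝ d y ∧ fderiv ℝ d y (B α) = 0)
    (hdense : ∀ ybar : Fin (M * N) → ℝ, Dense {y : Fin (M * N) → ℝ |
      ∃ (α : ℝ → A) (t : ℝ), Measurable α ∧ 0 ≤ t ∧
        y = ybar + ∫ s in (0 : ℝ)..t, B (α s)}) :
    ∀ y y', d y = d y' := by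
  intro y y'
  have hB (a : A) : B a ∈ invariantDirections ℝ d :=
    hLip.apply_add_smul_eq_of_ae_hasLineDerivAt_zero <| (hgrad a).mono fun _ h =>
      h.2 ▸ h.1.hasFDerivAt.hasLineDerivAt (B a)
  have hclosed : IsClosed {p | d p = d y} := isClosed_eq hLip.continuous continuous_const
  refine (hclosed.closure_subset_iff.2 ?_ ((hdense y).closure_eq ▸ mem_univ y')).symm
  rintro p ⟨α, t, -, -, rfl⟩
  simpa using Submodule.intervalIntegral_mem (fun s => hB (α s)) 0 t 1 y

/-- Step 2 of Theorem 4.5: a Lipschitz, `ℤ^{MN}`-periodic function `d` whose gradient is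
a.e. orthogonal to every drift vector `B(α)` is constant along controlled trajectories;
if the reachable set from every point is dense in the torus, then `d` is constant. -/
theorem lipschitz_periodic_invariant_dense_reachable_constant (M N : ℕ)
    (A : Type*) [MetricSpace A] [CompactSpace A] [MeasurableSpace A] [BorelSpace A]
    (B : A → (Fin (M * N) → ℝ)) (hB : Continuous B)
    (d : (Fin (M * N) → ℝ) → ℝ) (K : NNReal) (hLip : LipschitzWith K d)
    (hper : ∀ (x : Fin (M * N) → ℝ) (k : Fin (M * N) → ℤ),
      d (x + fun i => (k i : ℝ)) = d x)
    (hgrad : ∀ α : A, ∀ᵐ y ∂(volume : Measure (Fin (M * N) → ℝ)),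
      DifferentiableAt ℝ d y ∧ fderiv ℝ d y (B α) = 0)
    (hdense : ∀ ybar : Fin (M * N) → ℝ, Dense {y : Fin (M * N) → ℝ |
      ∃ (α : ℝ → A) (t : ℝ), Measurable α ∧ 0 ≤ t ∧
        y = ybar + ∫ s in (0 : ℝ)..t, B (α s)}) :
    ∀ y y', d y = d y' :=
  lipschitz_periodic_invariant_dense_reachable_constant_general M N A B d K hLip hgrad hdense
end
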